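/- Let (V, b) be a symplectic vector space of dimension 2ℓ (ℓ ≥ 1) over an algebraically closed field K of characteristic 2, and let e ∈ sp(V) be nilpotent with a single Jordan block of size 2ℓ on V, i.e. e^{2ℓ−1} ≠ 0 and e^{2ℓ} = 0. Let ẽ be the map induced by e on S²(V), let φ : S²(V) → K be determined by φ(xy) = b(x, y), and set α = ν₂(2ℓ). Then ker(ẽ^{2^α − 1}) ⊆ ker φ, and ker(ẽ^{2^α}) ⊄ ker φ. -/

import Mathlib

open scoped TensorProduct

/-- The symmetric square `S²(V)`: the quotient of `V ⊗ V` by the span of all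
`x ⊗ y - y ⊗ x`. -/
noncomputable abbrev SymSq (K V : Type*) [Field K] [AddCommGroup V] [Module K V] : Type _ :=
  TensorProduct K V V ⧸
    Submodule.span K {z : TensorProduct K V V | ∃ x y : V, z = x ⊗ₜ[K] y - y ⊗ₜ[K] x}

/-- The product `xy` in the symmetric square, i.e. the image of `x ⊗ y`. -/
noncomputable def SymSq.mul {K V : Type*} [Field K] [AddCommGroup V] [Module K V]
    (x y : V) : SymSq K V :=
  Submodule.Quotient.mk (x ⊗ₜ[K] y)

/-!
Write `n = 2ℓ = q u` with `q = 2^α` and `u` odd, pick `v` with `e^(n-1) v ≠ 0`, so that the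
`e^i v` (`i < n`) form a basis, and put `d m = b(e^m v, v)`. Since `e` is `b`-self-adjoint,
`b(e^i v, e^j v) = d (i + j)`; moreover `d` vanishes on even arguments (`b` is alternating) and
on arguments `≥ n`, while `d (n-1) ≠ 0` (`b` is nondegenerate). In characteristic 2,
`ẽ^q (xy) = (e^q x) y + x (e^q y)` and `ẽ^(q-1) (xy) = ∑_{t<q} (e^t x)(e^(q-1-t) y)`.

The first inclusion holds because `φ = ψ ∘ ẽ^(q-1)` for the symmetric form `ψ` with
`ψ(e^a v, e^a' v) = d (a + a' - (q-1))` if `a ≡ a' (mod 2q)` and `0` otherwise. Indeed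
`ψ(ẽ^(q-1)(e^i v · e^j v)) = #{t < q | i + t ≡ j + q - 1 - t (mod 2q)} · d (i + j)`, and this
count is `1` when `i + j` is odd. The formula for `ψ` is consistent with `e^a v = 0` for `a ≥ n`
because no multiple of `2q` lies within distance `q` of the odd multiple `n` of `q`.
For the second, `z = ∑_{s<u} (e^(qs) v)(e^(n-1-qs) v)` lies in `ker ẽ^q` (the terms of `ẽ^q z`
cancel in pairs) and `φ z = u · d (n-1) = d (n-1) ≠ 0`.
-/

open Finset Module

lemma CharTwo.add_self_eq_zero_of_module (K : Type*) {W : Type*} [Semiring K] [CharP K 2]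
    [AddCommMonoid W] [Module K W] (z : W) : z + z = 0 := by
  rw [← two_smul K z, CharTwo.two_eq_zero, zero_smul]

namespace SymSq

variable {K V M : Type*} [Field K] [AddCommGroup V] [Module K V] [AddCommGroup M] [Module K M]

@[simp]
lemma zero_mul (y : V) : mul (K := K) 0 y = 0 := by
  simp [mul]

@[simp]
lemma mul_zero (x : V) : mul (K := K) x 0 = 0 := by
  simp [mul]

noncomputable def lift (B : V →ₗ[K] V →ₗ[K] M) (hB : ∀ x y, B x y = B y x) :
    SymSq K V →ₗ[K] M :=
  Submodule.liftQ _ (TensorProduct.lift B) <| Submodule.span_le.2 <| by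
    rintro _ ⟨x, y, rfl⟩
    simp [hB x y]

@[simp]
lemma lift_mul (B : V →ₗ[K] V →ₗ[K] M) (hB : ∀ x y, B x y = B y x) (x y : V) :
    lift B hB (mul x y) = B x y := by
  simp [lift, mul]

lemma ext_basis {ι : Type*} (β : Basis ι K V) {f g : SymSq K V →ₗ[K] M}
    (h : ∀ i j, f (mul (β i) (β j)) = g (mul (β i) (β j))) : f = g :=
  Submodule.linearMap_qext _ <| TensorProduct.ext <| LinearMap.ext_basis β β h

section CharTwo

variable [CharP K 2] {e : End K V} {et : End K (SymSq K V)}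

lemma pow_two_pow_apply_mul (het : ∀ x y, et (mul x y) = mul (e x) y + mul x (e y))
    (k : ℕ) (x y : V) :
    (et ^ 2 ^ k) (mul x y) = mul ((e ^ 2 ^ k) x) y + mul x ((e ^ 2 ^ k) y) := by
  induction k generalizing x y with
  | zero => simpa using het x y
  | succ k ih =>
    simp only [pow_succ 2 k, pow_mul, sq, End.mul_apply, ih, map_add]
    rw [add_assoc, ← add_assoc (mul ((e ^ 2 ^ k) x) ((e ^ 2 ^ k) y)),
      CharTwo.add_self_eq_zero_of_module K, zero_add]

lemma pow_two_pow_sub_one_apply_mul (het : ∀ x y, et (mul x y) = mul (e x) y + mul x (e y))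
    (k : ℕ) (x y : V) :
    (et ^ (2 ^ k - 1)) (mul x y) =
      ∑ t ∈ range (2 ^ k), mul ((e ^ t) x) ((e ^ (2 ^ k - 1 - t)) y) := by
  induction k generalizing x y with
  | zero => simp
  | succ k ih =>
    have hsplit : 2 ^ (k + 1) - 1 = 2 ^ k + (2 ^ k - 1) := by
      have := Nat.one_le_two_pow (n := k)
      rw [pow_succ]
      omega
    rw [hsplit, pow_add, End.mul_apply, ih, map_sum]
    simp only [pow_two_pow_apply_mul het, ← End.mul_apply, ← pow_add]
    rw [sum_add_distrib, add_comm, pow_succ 2 k, mul_two, sum_range_add]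
    congr 1 <;> refine sum_congr rfl fun t ht => ?_ <;> rw [mem_range] at ht <;> congr 3 <;> omega

end CharTwo

end SymSq

section CyclicVector

variable {K V : Type*} [Field K] [AddCommGroup V] [Module K V] {e : End K V} {v : V} {n : ℕ}

lemma linearIndependent_pow_apply (hv : (e ^ (n - 1)) v ≠ 0) (he : e ^ n = 0) :
    LinearIndependent K fun i : Fin n => (e ^ (i : ℕ)) v := by
  rw [Fintype.linearIndependent_iff]
  intro g hg i
  induction i using WellFoundedLT.induction with
  | _ i ih =>
    have key := congrArg (e ^ (n - 1 - (i : ℕ))) hg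
    simp only [map_sum, map_smul, map_zero, ← End.mul_apply, ← pow_add] at key
    rw [sum_eq_single i, Nat.sub_add_cancel (by omega)] at key
    · exact (smul_eq_zero.1 key).resolve_right hv
    · intro j _ hji
      rcases lt_or_gt_of_ne hji with h | h
      · rw [ih j h, zero_smul]
      · rw [pow_eq_zero_of_le (by omega) he, LinearMap.zero_apply, smul_zero]
    · simp

noncomputable def cyclicBasis [NeZero n] (hn : finrank K V = n) (hv : (e ^ (n - 1)) v ≠ 0)
    (he : e ^ n = 0) : Basis (Fin n) K V :=
  basisOfLinearIndependentOfCardEqFinrank (linearIndependent_pow_apply hv he) (by simp [hn])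

@[simp]
lemma coe_cyclicBasis [NeZero n] (hn : finrank K V = n) (hv : (e ^ (n - 1)) v ≠ 0)
    (he : e ^ n = 0) : ⇑(cyclicBasis hn hv he) = fun i : Fin n => (e ^ (i : ℕ)) v :=
  coe_basisOfLinearIndependentOfCardEqFinrank ..

variable {b : V →ₗ[K] V →ₗ[K] K}

lemma LinearMap.IsAdjointPair.pow (h : b.IsAdjointPair b e e) (k : ℕ) :
    b.IsAdjointPair b ⇑(e ^ k) ⇑(e ^ k) := by
  induction k with
  | zero => exact LinearMap.isAdjointPair_one
  | succ k ih =>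
    have := ih.mul h
    rwa [← pow_succ, ← pow_succ'] at this

lemma LinearMap.IsAdjointPair.apply_pow_apply_pow (h : b.IsAdjointPair b e e) (v : V)
    (i j : ℕ) :
    b ((e ^ i) v) ((e ^ j) v) = b ((e ^ (i + j)) v) v := by
  rw [← h.pow j, ← End.mul_apply, ← pow_add, add_comm]

lemma LinearMap.IsAlt.apply_pow_apply_eq_zero_of_even (halt : b.IsAlt)
    (h : b.IsAdjointPair b e e) (v : V) {m : ℕ} (hm : Even m) : b ((e ^ m) v) v = 0 := by
  obtain ⟨r, rfl⟩ := hm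
  rw [← h.apply_pow_apply_pow]
  exact halt _

lemma LinearMap.SeparatingLeft.apply_pow_sub_one_apply_ne_zero [NeZero n]
    (hsep : b.SeparatingLeft) (h : b.IsAdjointPair b e e) (hn : finrank K V = n)
    (hv : (e ^ (n - 1)) v ≠ 0) (he : e ^ n = 0) : b ((e ^ (n - 1)) v) v ≠ 0 := by
  intro h0
  have : b ((e ^ (n - 1)) v) = 0 := (cyclicBasis hn hv he).ext fun i => by
    rw [coe_cyclicBasis, h.apply_pow_apply_pow, LinearMap.zero_apply]
    rcases Nat.eq_zero_or_pos i with hi | hi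
    · simpa [hi] using h0
    · rw [pow_eq_zero_of_le (by omega) he, LinearMap.zero_apply, map_zero, LinearMap.zero_apply]
  exact hv (hsep _ fun y => by rw [this, LinearMap.zero_apply])

end CyclicVector

lemma card_filter_modEq_eq_one {q i j : ℕ} (hq : Even q) (hq0 : q ≠ 0) (hij : Odd (i + j)) :
    #{t ∈ range q | t + i ≡ q - 1 - t + j [MOD 2 * q]} = 1 := by
  obtain ⟨m, hm⟩ : ∃ m : ℤ, (j : ℤ) + q - 1 - i = 2 * m := by
    obtain ⟨r, hr⟩ := hq
    obtain ⟨s, hs⟩ := hij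
    exact ⟨s - i + r, by omega⟩
  have key : ∀ t < q, t + i ≡ q - 1 - t + j [MOD 2 * q] ↔ (t : ℤ) = m % q := by
    intro t ht
    rw [← Int.natCast_modEq_iff, Int.modEq_iff_dvd]
    push_cast [Nat.cast_sub (show t ≤ q - 1 by omega), Nat.cast_sub (show 1 ≤ q by omega)]
    rw [show (q : ℤ) - 1 - t + j - (t + i) = 2 * (m - t) by linarith,
      mul_dvd_mul_iff_left two_ne_zero, ← Int.modEq_iff_dvd, Int.ModEq,
      Int.emod_eq_of_lt (by omega) (by omega), eq_comm]
  have h0 : 0 ≤ m % q := Int.emod_nonneg _ (by omega)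
  have h1 : m % q < q := Int.emod_lt_of_pos _ (by omega)
  refine card_eq_one.2 ⟨(m % q).toNat, ext fun t => ?_⟩
  simp only [mem_filter, mem_range, mem_singleton]
  constructor
  · rintro ⟨ht, hmod⟩
    have := (key t ht).1 hmod
    omega
  · rintro rfl
    exact ⟨by omega, (key _ (by omega)).2 (by omega)⟩

section FactorCoeff

variable {R : Type*} [AddCommMonoid R]

/-- `factorCoeff d q a a'` is the value `ψ(eᵃv, eᵃ'v)` of the symmetric form `ψ` with
`φ = ψ ∘ ẽ^(q-1)`, when `d m = b(eᵐv, v)`. -/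
def factorCoeff (d : ℕ → R) (q a a' : ℕ) : R :=
  if a ≡ a' [MOD 2 * q] then d (a + a' - (q - 1)) else 0

lemma factorCoeff_comm (d : ℕ → R) (q a a' : ℕ) :
    factorCoeff d q a a' = factorCoeff d q a' a := by
  simp only [factorCoeff, Nat.ModEq.comm (a := a), add_comm a]

lemma factorCoeff_eq_zero_of_le {d : ℕ → R} {q u a : ℕ} (hd : ∀ m, q * u ≤ m → d m = 0)
    (hu : Odd u) (ha : q * u ≤ a) (a' : ℕ) : factorCoeff d q a a' = 0 := by
  unfold factorCoeff
  split_ifs with hmod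
  · refine hd _ ?_
    have hqu : q ≤ q * u := Nat.le_mul_of_pos_right q hu.pos
    rcases le_or_gt a' a with ha' | ha'
    · -- multiples of `2q` keep a distance at least `q` from the odd multiple `q * u` of `q`
      obtain ⟨s, hs⟩ := (Nat.modEq_iff_dvd' ha').1 hmod.symm
      obtain ⟨r, rfl⟩ := hu
      have : a - a' + q ≤ q * (2 * r + 1) ∨ q * (2 * r + 1) + q ≤ a - a' := by
        rcases le_or_gt s r with hsr | hsr
        · left; nlinarith
        · right; nlinarith
      omega
    · omega
  · rfl

lemma sum_factorCoeff {d : ℕ → R} (hd : ∀ m, Even m → d m = 0) {q : ℕ} (hq : Even q)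
    (hq0 : q ≠ 0) (i j : ℕ) :
    ∑ t ∈ range q, factorCoeff d q (t + i) (q - 1 - t + j) = d (i + j) := by
  have hsum : ∀ t ∈ range q, t + i + (q - 1 - t + j) - (q - 1) = i + j := fun t ht => by
    rw [mem_range] at ht
    omega
  simp only [factorCoeff]
  rw [sum_congr rfl fun t ht => by rw [hsum t ht], sum_ite, sum_const_zero, add_zero, sum_const]
  rcases Nat.even_or_odd (i + j) with hij | hij
  · rw [hd _ hij, smul_zero]
  · rw [card_filter_modEq_eq_one hq hq0 hij, one_smul]

end FactorCoeff

section JordanBlock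

variable {K V : Type*} [Field K] [CharP K 2] [AddCommGroup V] [Module K V]
  {b : V →ₗ[K] V →ₗ[K] K} {e : End K V} {et : End K (SymSq K V)}
  {φ : SymSq K V →ₗ[K] K} {v : V} {k u : ℕ}

theorem exists_eq_comp_pow_two_pow_sub_one (halt : b.IsAlt) (hadj : b.IsAdjointPair b e e)
    (hk : k ≠ 0) (hu : Odd u) (hn : finrank K V = 2 ^ k * u)
    (hv : (e ^ (2 ^ k * u - 1)) v ≠ 0) (he : e ^ (2 ^ k * u) = 0)
    (het : ∀ x y, et (SymSq.mul x y) = SymSq.mul (e x) y + SymSq.mul x (e y))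
    (hφ : ∀ x y, φ (SymSq.mul x y) = b x y) :
    ∃ ψ : SymSq K V →ₗ[K] K, φ = ψ ∘ₗ et ^ (2 ^ k - 1) := by
  have : NeZero (2 ^ k * u) := ⟨mul_ne_zero (pow_ne_zero _ two_ne_zero) hu.pos.ne'⟩
  set B := cyclicBasis hn hv he
  set d : ℕ → K := fun m => b ((e ^ m) v) v
  have hd : ∀ m, 2 ^ k * u ≤ m → d m = 0 := fun m hm => by
    simp [d, pow_eq_zero_of_le hm he]
  set Ψ := Matrix.toLinearMap₂ B B fun i j => factorCoeff d (2 ^ k) i j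
  have hΨ : ∀ a a', Ψ ((e ^ a) v) ((e ^ a') v) = factorCoeff d (2 ^ k) a a' := by
    intro a a'
    rcases lt_or_ge a (2 ^ k * u) with ha | ha
    · rcases lt_or_ge a' (2 ^ k * u) with ha' | ha'
      · simpa [B] using Matrix.toLinearMap₂_apply_basis B B
          (fun i j : Fin (2 ^ k * u) => factorCoeff d (2 ^ k) i j) ⟨a, ha⟩ ⟨a', ha'⟩
      · rw [pow_eq_zero_of_le ha' he, LinearMap.zero_apply, map_zero, factorCoeff_comm,
          factorCoeff_eq_zero_of_le hd hu ha']
    · rw [pow_eq_zero_of_le ha he, LinearMap.zero_apply, map_zero, LinearMap.zero_apply,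
        factorCoeff_eq_zero_of_le hd hu ha]
  have hΨ_symm : ∀ x y, Ψ x y = Ψ y x := by
    have : Ψ.flip = Ψ := LinearMap.ext_basis B B fun i j => by
      simp [B, hΨ, factorCoeff_comm]
    exact fun x y => LinearMap.congr_fun₂ this y x
  refine ⟨SymSq.lift Ψ hΨ_symm, SymSq.ext_basis B fun i j => ?_⟩
  simp only [B, coe_cyclicBasis, hφ, LinearMap.comp_apply, map_sum, SymSq.lift_mul,
    SymSq.pow_two_pow_sub_one_apply_mul het, ← End.mul_apply, ← pow_add, hΨ,
    hadj.apply_pow_apply_pow]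
  exact (sum_factorCoeff (fun m hm => halt.apply_pow_apply_eq_zero_of_even hadj v hm)
    (Nat.even_pow.2 ⟨even_two, hk⟩) (pow_ne_zero _ two_ne_zero) _ _).symm

theorem not_ker_pow_le_ker {q : ℕ} (hsep : b.SeparatingLeft) (hadj : b.IsAdjointPair b e e)
    (hq : 0 < q) (hu : Odd u) (hn : finrank K V = q * u)
    (hv : (e ^ (q * u - 1)) v ≠ 0) (he : e ^ (q * u) = 0)
    (hetq : ∀ x y, (et ^ q) (SymSq.mul x y) = SymSq.mul ((e ^ q) x) y + SymSq.mul x ((e ^ q) y))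
    (hφ : ∀ x y, φ (SymSq.mul x y) = b x y) :
    ¬ LinearMap.ker (et ^ q) ≤ LinearMap.ker φ := by
  have : NeZero (q * u) := ⟨mul_ne_zero hq.ne' hu.pos.ne'⟩
  have hsu : ∀ s ∈ range u, q * s + q ≤ q * u := fun s hs => by
    rw [← mul_add_one]
    exact Nat.mul_le_mul_left q (mem_range.1 hs)
  let z := ∑ s ∈ range u, SymSq.mul (K := K) ((e ^ (q * s)) v) ((e ^ (q * u - 1 - q * s)) v)
  let Y : ℕ → SymSq K V := fun s =>
    SymSq.mul ((e ^ (q * s)) v) ((e ^ (q * u + q - 1 - q * s)) v)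
  have hY : ∀ s ∈ range u,
      (et ^ q) (SymSq.mul (K := K) ((e ^ (q * s)) v) ((e ^ (q * u - 1 - q * s)) v)) =
        Y (s + 1) + Y s := by
    intro s hs
    have := hsu s hs
    simp only [Y, hetq, ← End.mul_apply, ← pow_add, mul_add_one]
    congr 4 <;> omega
  have hz : (et ^ q) z = 0 := by
    have hY_top : Y u = 0 := by simp [Y, pow_eq_zero_of_le (le_refl _) he]
    have hY_bot : Y 0 = 0 := by
      simp [Y, pow_eq_zero_of_le (show q * u ≤ q * u + q - 1 by omega) he]
    have hshift : ∑ s ∈ range u, Y (s + 1) = ∑ s ∈ range u, Y s := by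
      have h1 := sum_range_succ' Y u
      rw [hY_bot, add_zero, sum_range_succ, hY_top, add_zero] at h1
      exact h1.symm
    rw [map_sum, sum_congr rfl hY, sum_add_distrib, hshift,
      CharTwo.add_self_eq_zero_of_module K]
  have hφz : φ z = b ((e ^ (q * u - 1)) v) v := by
    have : ∀ s ∈ range u, q * s + (q * u - 1 - q * s) = q * u - 1 := fun s hs => by
      have := hsu s hs
      omega
    simp only [z, map_sum, hφ, hadj.apply_pow_apply_pow]
    rw [sum_congr rfl fun s hs => by rw [this s hs], sum_const, card_range, nsmul_eq_mul,
      natCast_eq_one_of_odd_of_two_eq_zero hu CharTwo.two_eq_zero, one_mul]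
  intro hle
  exact hsep.apply_pow_sub_one_apply_ne_zero hadj hn hv he (hφz ▸ hle hz)

end JordanBlock

theorem stmt15_general (K : Type*) [Field K] [CharP K 2]
    (V : Type*) [AddCommGroup V] [Module K V]
    (ℓ : ℕ) (hl : 1 ≤ ℓ) (hdim : Module.finrank K V = 2 * ℓ)
    (b : V →ₗ[K] V →ₗ[K] K)
    (halt : ∀ v : V, b v v = 0)
    (hnd : ∀ v : V, (∀ w : V, b v w = 0) → v = 0)
    (e : Module.End K V)
    (hsp : ∀ v w : V, b (e v) w + b v (e w) = 0)
    (he1 : e ^ (2 * ℓ - 1) ≠ 0) (he2 : e ^ (2 * ℓ) = 0)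
    (et : Module.End K (SymSq K V))
    (het : ∀ x y : V, et (SymSq.mul x y) = SymSq.mul (e x) y + SymSq.mul x (e y))
    (φ : SymSq K V →ₗ[K] K)
    (hφ : ∀ x y : V, φ (SymSq.mul x y) = b x y) :
    LinearMap.ker (et ^ (2 ^ padicValNat 2 (2 * ℓ) - 1)) ≤ LinearMap.ker φ ∧
      ¬ LinearMap.ker (et ^ (2 ^ padicValNat 2 (2 * ℓ))) ≤ LinearMap.ker φ := by
  have hadj : b.IsAdjointPair b e e := fun x y => CharTwo.add_eq_zero.1 (hsp x y)
  have hn : 2 * ℓ ≠ 0 := by omega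
  set α := padicValNat 2 (2 * ℓ)
  have hα : α ≠ 0 :=
    Nat.one_le_iff_ne_zero.1 (one_le_padicValNat_of_dvd hn (dvd_mul_right 2 ℓ))
  set u := Nat.divMaxPow (2 * ℓ) 2
  have hu : Odd u := Nat.odd_iff.2 (Nat.two_dvd_ne_zero.1 (Nat.not_dvd_divMaxPow one_lt_two hn))
  have h2ℓ : 2 * ℓ = 2 ^ α * u := (Nat.pow_padicValNat_mul_divMaxPow 2 _).symm
  rw [h2ℓ] at hdim he1 he2
  obtain ⟨v, hv⟩ : ∃ v, (e ^ (2 ^ α * u - 1)) v ≠ 0 := by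
    by_contra! h
    exact he1 (LinearMap.ext h)
  obtain ⟨ψ, hψ⟩ := exists_eq_comp_pow_two_pow_sub_one halt hadj hα hu hdim hv he2 het hφ
  exact ⟨hψ ▸ LinearMap.ker_le_ker_comp _ _,
    not_ker_pow_le_ker hnd hadj (by positivity) hu hdim hv he2
      (SymSq.pow_two_pow_apply_mul het α) hφ⟩

/-- Lemma: for nilpotent `e ∈ sp(V)` with `V ↓ K[e] = V(2ℓ)` (a single Jordan block of size
`2ℓ`), with `α = ν₂(2ℓ)`: `ker(ẽ^(2^α - 1)) ⊆ ker φ` and `ker(ẽ^(2^α)) ⊄ ker φ`. -/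
theorem stmt15 (K : Type*) [Field K] [IsAlgClosed K] [CharP K 2]
    (V : Type*) [AddCommGroup V] [Module K V] [FiniteDimensional K V]
    (ℓ : ℕ) (hl : 1 ≤ ℓ) (hdim : Module.finrank K V = 2 * ℓ)
    (b : V →ₗ[K] V →ₗ[K] K)
    (halt : ∀ v : V, b v v = 0)
    (hnd : ∀ v : V, (∀ w : V, b v w = 0) → v = 0)
    (e : Module.End K V)
    (hsp : ∀ v w : V, b (e v) w + b v (e w) = 0)
    (he1 : e ^ (2 * ℓ - 1) ≠ 0) (he2 : e ^ (2 * ℓ) = 0)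
    (et : Module.End K (SymSq K V))
    (het : ∀ x y : V, et (SymSq.mul x y) = SymSq.mul (e x) y + SymSq.mul x (e y))
    (φ : SymSq K V →ₗ[K] K)
    (hφ : ∀ x y : V, φ (SymSq.mul x y) = b x y) :
    LinearMap.ker (et ^ (2 ^ padicValNat 2 (2 * ℓ) - 1)) ≤ LinearMap.ker φ ∧
      ¬ LinearMap.ker (et ^ (2 ^ padicValNat 2 (2 * ℓ))) ≤ LinearMap.ker φ :=
  stmt15_general K V ℓ hl hdim b halt hnd e hsp he1 he2 et het φ hφ
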